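/- arXiv:1711.08172 — 5 statements merged into one kernel-verified Lean document; each statement's English description precedes it below -/
import Mathlib

section
/- Let F(x) = x²/2 + a·sin(bπ(x − 1/(2b))) + a for constants a > 0, b > 0. If R ≥ min{2√a, 2/b}, then the only point x̄ ∈ ℝ satisfying F(x̄) = min{F(x) : x ∈ [x̄ − R, x̄ + R]} is the global minimizer x* = 0. -/
/-!
Up to the shift, `F x = x²/2 + a (1 - cos (bπx))`, which is even, vanishes at `0` and lies between
`x²/2` and `x²/2 + 2a`. If `x̄ > R`, the window around `x̄` contains a strictly better point: for
`R ≥ 2√a`, the point `x̄ - 2√a` (the oscillation `2a` cannot make up the loss of the quadratic);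
for `R ≥ 2/b`, a zero `2k/b ∈ (0, x̄)` of the oscillation. So `|x̄| ≤ R`, the window contains `0`,
and `x̄²/2 ≤ F x̄ ≤ F 0 = 0`.
-/

open Real Set

lemma sin_mul_sub_half_period (a b x : ℝ) (hb : b ≠ 0) :
    a * sin (b * π * (x - 1 / (2 * b))) + a = a * (1 - cos (b * π * x)) := by
  have harg : b * π * (x - 1 / (2 * b)) = b * π * x - π / 2 := by field_simp
  rw [harg, sin_sub_pi_div_two]
  ring

namespace OscillatingQuadratic

variable {a b : ℝ} {F : ℝ → ℝ} (hF : ∀ x, F x = x ^ 2 / 2 + a * (1 - cos (b * π * x)))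
include hF

lemma sq_div_two_le (ha : 0 ≤ a) (x : ℝ) : x ^ 2 / 2 ≤ F x := by
  rw [hF]
  nlinarith [cos_le_one (b * π * x)]

lemma le_sq_div_two_add (ha : 0 ≤ a) (x : ℝ) : F x ≤ x ^ 2 / 2 + 2 * a := by
  rw [hF]
  nlinarith [neg_one_le_cos (b * π * x)]

lemma apply_zero : F 0 = 0 := by
  simp [hF]

lemma apply_neg (x : ℝ) : F (-x) = F x := by
  rw [hF, hF, mul_neg, cos_neg, neg_sq]

lemma apply_two_mul_int_div (hb : b ≠ 0) (k : ℤ) : F (2 * k / b) = (2 * k / b) ^ 2 / 2 := by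
  have harg : b * π * (2 * k / b) = k * (2 * π) := by field_simp
  rw [hF, harg, cos_int_mul_two_pi]
  ring

lemma apply_sub_two_sqrt_lt (ha : 0 < a) {x : ℝ} (hx : 2 * √a < x) : F (x - 2 * √a) < F x := by
  have hsq : √a ^ 2 = a := sq_sqrt ha.le
  calc F (x - 2 * √a) ≤ (x - 2 * √a) ^ 2 / 2 + 2 * a := le_sq_div_two_add hF ha.le _
    _ = x ^ 2 / 2 - 2 * √a * (x - 2 * √a) := by linear_combination -2 * hsq
    _ < x ^ 2 / 2 := by nlinarith [sqrt_pos.mpr ha]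
    _ ≤ F x := sq_div_two_le hF ha.le x

lemma exists_lt_of_two_div_lt (ha : 0 ≤ a) (hb : 0 < b) {x : ℝ} (hx : 2 / b < x) :
    ∃ y ∈ Ico (x - 2 / b) x, F y < F x := by
  set k : ℤ := ⌈x * b / 2⌉ - 1
  have hk_lt : (k : ℝ) < x * b / 2 := by
    have := Int.ceil_lt_add_one (x * b / 2)
    push_cast [k]
    linarith
  have hk_ge : x * b / 2 - 1 ≤ k := by
    have := Int.le_ceil (x * b / 2)
    push_cast [k]
    linarith
  have hxb : 2 < x * b := by rwa [div_lt_iff₀ hb] at hx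
  have hy_pos : 0 < 2 * (k : ℝ) / b := by
    have : (0 : ℝ) < k := by linarith
    positivity
  have hy_lt : 2 * (k : ℝ) / b < x := by rw [div_lt_iff₀ hb]; linarith
  have hy_ge : x - 2 / b ≤ 2 * (k : ℝ) / b := by
    rw [sub_le_iff_le_add, ← add_div, le_div_iff₀ hb]
    linarith
  refine ⟨2 * k / b, ⟨hy_ge, hy_lt⟩, ?_⟩
  calc F (2 * k / b) = (2 * k / b) ^ 2 / 2 := apply_two_mul_int_div hF hb.ne' k
    _ < x ^ 2 / 2 := by nlinarith
    _ ≤ F x := sq_div_two_le hF ha x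

lemma le_of_isMinOn_Icc (ha : 0 < a) (hb : 0 < b) {R x : ℝ} (hR : min (2 * √a) (2 / b) ≤ R)
    (hmin : IsMinOn F (Icc (x - R) (x + R)) x) : x ≤ R := by
  by_contra! hx
  rcases min_le_iff.mp hR with hRa | hRb
  · have hy : x - 2 * √a ∈ Icc (x - R) (x + R) := ⟨by linarith, by linarith [sqrt_nonneg a]⟩
    exact (isMinOn_iff.mp hmin _ hy).not_gt (apply_sub_two_sqrt_lt hF ha (hRa.trans_lt hx))
  · obtain ⟨y, ⟨hy_ge, hy_lt⟩, hFy⟩ := exists_lt_of_two_div_lt hF ha.le hb (hRb.trans_lt hx)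
    exact (isMinOn_iff.mp hmin y ⟨by linarith, by linarith⟩).not_gt hFy

lemma isMinOn_Icc_neg {R x : ℝ} (hmin : IsMinOn F (Icc (x - R) (x + R)) x) :
    IsMinOn F (Icc (-x - R) (-x + R)) (-x) := by
  refine isMinOn_iff.mpr fun y hy => ?_
  rw [apply_neg hF, ← apply_neg hF y]
  exact isMinOn_iff.mp hmin (-y) ⟨by linarith [hy.2], by linarith [hy.1]⟩

lemma eq_zero_of_isMinOn_Icc (ha : 0 < a) (hb : 0 < b) {R x : ℝ}
    (hR : min (2 * √a) (2 / b) ≤ R) (hmin : IsMinOn F (Icc (x - R) (x + R)) x) : x = 0 := by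
  have hx_le : x ≤ R := le_of_isMinOn_Icc hF ha hb hR hmin
  have hx_ge : -x ≤ R := le_of_isMinOn_Icc hF ha hb hR (isMinOn_Icc_neg hF hmin)
  have hF_le : F x ≤ 0 := apply_zero hF ▸ isMinOn_iff.mp hmin 0 ⟨by linarith, by linarith⟩
  nlinarith [sq_div_two_le hF ha.le x]

end OscillatingQuadratic

theorem stmt_0 (a b : ℝ) (ha : 0 < a) (hb : 0 < b)
    (F : ℝ → ℝ)
    (hF : ∀ x, F x = x ^ 2 / 2 + a * Real.sin (b * Real.pi * (x - 1 / (2 * b))) + a)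
    (R : ℝ) (hR : min (2 * Real.sqrt a) (2 / b) ≤ R)
    (xbar : ℝ) (hmin : ∀ x ∈ Set.Icc (xbar - R) (xbar + R), F xbar ≤ F x) :
    xbar = 0 := by
  have hF' : ∀ x, F x = x ^ 2 / 2 + a * (1 - cos (b * π * x)) := fun x => by
    rw [hF, add_assoc, sin_mul_sub_half_period a b x hb.ne']
  exact OscillatingQuadratic.eq_zero_of_isMinOn_Icc hF' ha hb hR (isMinOn_iff.mpr hmin)
end

section
/- Let f : ℝⁿ → ℝ be differentiable and satisfy the PL inequality with constant μ > 0, with quadratic growth f(x) − f* ≥ (μ/2)·d(x, χ_f*)² and ‖∇f(x)‖ ≥ μ·d(x, χ_f*) where χ_f* is the (nonempty) set of global minimizers of f, and assume diam(χ_f*) ≤ M. Let r satisfy |r(x) − r(y)| ≤ α‖x − y‖ + 2β. Set F = f + r with global minimizer x*. If x̄ satisfies ‖∇f(x̄)‖ ≤ δ and also ‖∇f(x*)‖ ≤ δ, then d(x̄, x*) ≤ 2δ/μ + M and F(x̄) − F(x*) ≤ (δ² + 2αδ)/μ + αM + 2β. -/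
/-!
The gradient bound `μ · d(x, χ_f*) ≤ ‖∇f(x)‖` puts both `x̄` and `x*` within `δ/μ` of `χ_f*`,
a set of diameter at most `M`, which gives the distance bound. For the values, PL gives
`f(x̄) - f* ≤ δ²/(2μ)`, quadratic growth gives `f(x*) ≥ f*`, and the growth condition on `r`
turns the distance bound into `r(x̄) - r(x*) ≤ α(2δ/μ + M) + 2β`.
-/

open Metric

theorem Metric.dist_le_infDist_add_infDist_add {X : Type*} [PseudoMetricSpace X] {s : Set X}
    {M : ℝ} (hs : s.Nonempty) (hM : 0 ≤ M) (hdiam : ∀ p ∈ s, ∀ q ∈ s, dist p q ≤ M) (x y : X) :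
    dist x y ≤ infDist x s + infDist y s + M := by
  have hbdd : Bornology.IsBounded s := isBounded_iff.2 ⟨M, hdiam⟩
  have hdiam_le : diam s ≤ M := diam_le_of_forall_dist_le hM hdiam
  suffices dist x y - infDist x s - M ≤ infDist y s by linarith
  refine (le_infDist hs).2 fun q hq => ?_
  have hxq := dist_le_infDist_add_diam (x := x) hbdd hq
  linarith [dist_triangle_right x y q]

theorem sub_le_sq_div_of_pl {μ v g δ : ℝ} (hμ : 0 < μ) (hPL : μ * v ≤ 1 / 2 * g ^ 2)
    (hg : |g| ≤ δ) : v ≤ δ ^ 2 / (2 * μ) := by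
  rw [le_div_iff₀ (by positivity)]
  nlinarith [sq_le_sq' (abs_le.1 hg).1 (abs_le.1 hg).2]

theorem stmt_3_general (n : ℕ) (f r : EuclideanSpace ℝ (Fin n) → ℝ)
    (μ α β δ M : ℝ) (hμ : 0 < μ) (hα : 0 ≤ α) (hM : 0 ≤ M)
    (χf : Set (EuclideanSpace ℝ (Fin n)))
    (hne : χf.Nonempty)
    (fstar : ℝ)
    (hPL : ∀ x, μ * (f x - fstar) ≤ (1 / 2) * ‖gradient f x‖ ^ 2)
    (hQG : ∀ x, μ / 2 * (Metric.infDist x χf) ^ 2 ≤ f x - fstar)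
    (hgrad : ∀ x, μ * Metric.infDist x χf ≤ ‖gradient f x‖)
    (hdiam : ∀ x ∈ χf, ∀ y ∈ χf, dist x y ≤ M)
    (hr : ∀ x y, |r x - r y| ≤ α * ‖x - y‖ + 2 * β)
    (F : EuclideanSpace ℝ (Fin n) → ℝ) (hF : ∀ x, F x = f x + r x)
    (xstar : EuclideanSpace ℝ (Fin n))
    (xbar : EuclideanSpace ℝ (Fin n))
    (hxbar : ‖gradient f xbar‖ ≤ δ) (hxstarg : ‖gradient f xstar‖ ≤ δ) :
    dist xbar xstar ≤ 2 * δ / μ + M ∧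
      F xbar - F xstar ≤ (δ ^ 2 + 2 * α * δ) / μ + α * M + 2 * β := by
  have hinfDist_le {x} (hx : ‖gradient f x‖ ≤ δ) : infDist x χf ≤ δ / μ := by
    rw [le_div_iff₀' hμ]; exact (hgrad x).trans hx
  have hdist : dist xbar xstar ≤ 2 * δ / μ + M := by
    have := dist_le_infDist_add_infDist_add hne hM hdiam xbar xstar
    have htwo : 2 * δ / μ = δ / μ + δ / μ := by ring
    linarith [hinfDist_le hxbar, hinfDist_le hxstarg]
  refine ⟨hdist, ?_⟩
  have hbar : f xbar - fstar ≤ δ ^ 2 / (2 * μ) :=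
    sub_le_sq_div_of_pl hμ (hPL xbar) (by rwa [abs_norm])
  have hstar : 0 ≤ f xstar - fstar := le_trans (by positivity) (hQG xstar)
  have hr_le : r xbar - r xstar ≤ α * (2 * δ / μ + M) + 2 * β := by
    have := (le_abs_self _).trans (hr xbar xstar)
    rw [← dist_eq_norm] at this
    linarith [mul_le_mul_of_nonneg_left hdist hα]
  have hhalf : δ ^ 2 / (2 * μ) ≤ δ ^ 2 / μ :=
    div_le_div_of_nonneg_left (sq_nonneg δ) hμ (by linarith)
  have hsplit : (δ ^ 2 + 2 * α * δ) / μ = δ ^ 2 / μ + α * (2 * δ / μ) := by ring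
  rw [hF, hF, hsplit]
  linarith

theorem stmt_3 (n : ℕ) (f r : EuclideanSpace ℝ (Fin n) → ℝ)
    (μ α β δ M : ℝ) (hμ : 0 < μ) (hα : 0 ≤ α) (hβ : 0 ≤ β) (hM : 0 ≤ M)
    (hf : Differentiable ℝ f)
    (χf : Set (EuclideanSpace ℝ (Fin n))) (hχf : χf = {x | ∀ y, f x ≤ f y})
    (hne : χf.Nonempty)
    (fstar : ℝ) (hfstar : ∀ x ∈ χf, f x = fstar)
    (hPL : ∀ x, μ * (f x - fstar) ≤ (1 / 2) * ‖gradient f x‖ ^ 2)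
    (hQG : ∀ x, μ / 2 * (Metric.infDist x χf) ^ 2 ≤ f x - fstar)
    (hgrad : ∀ x, μ * Metric.infDist x χf ≤ ‖gradient f x‖)
    (hdiam : ∀ x ∈ χf, ∀ y ∈ χf, dist x y ≤ M)
    (hr : ∀ x y, |r x - r y| ≤ α * ‖x - y‖ + 2 * β)
    (F : EuclideanSpace ℝ (Fin n) → ℝ) (hF : ∀ x, F x = f x + r x)
    (xstar : EuclideanSpace ℝ (Fin n)) (hxstar : ∀ y, F xstar ≤ F y)
    (xbar : EuclideanSpace ℝ (Fin n))
    (hxbar : ‖gradient f xbar‖ ≤ δ) (hxstarg : ‖gradient f xstar‖ ≤ δ) :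
    dist xbar xstar ≤ 2 * δ / μ + M ∧
      F xbar - F xstar ≤ (δ ^ 2 + 2 * α * δ) / μ + α * M + 2 * β :=
  stmt_3_general n f r μ α β δ M hμ hα hM χf hne fstar hPL hQG hgrad hdiam hr F hF xstar xbar hxbar
    hxstarg
end

section
/- Suppose f : ℝⁿ → ℝ is differentiable with L-Lipschitz gradient, r satisfies |r(x) − r(y)| ≤ α‖x − y‖ + 2β, and F = f + r. If x̄ is an R-local minimizer of F (i.e., F(x̄) ≤ F(x) for all x ∈ B(x̄, R)) with R > 0, then ‖∇f(x̄)‖ ≤ α + max{4β/R, 2√(βL)}. -/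
/-!
Stepping a distance `s ≤ R` from `x̄` against `∇f(x̄)` lowers `f` by at least
`s‖∇f(x̄)‖ - (L/2)s²` (descent lemma), while `r` rises by at most `αs + 2β`. Minimality of `x̄`
therefore gives `s(‖∇f(x̄)‖ - α) ≤ (L/2)s² + 2β` for all `s ∈ [0, R]`; taking
`s = (‖∇f(x̄)‖ - α)/L` when this lies in `[0, R]`, and `s = R` otherwise, yields the bound.
-/

open Set InnerProductSpace Metric
open scoped Gradient

section NormedSpace

variable {E : Type*} [NormedAddCommGroup E] [NormedSpace ℝ E] {f : E → ℝ} {L : ℝ}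

theorem abs_sub_sub_fderiv_le_of_lipschitz_fderiv (hf : Differentiable ℝ f)
    (hLip : ∀ x y, ‖fderiv ℝ f x - fderiv ℝ f y‖ ≤ L * ‖x - y‖) (x y : E) :
    |f y - f x - fderiv ℝ f x (y - x)| ≤ L / 2 * ‖y - x‖ ^ 2 := by
  set v := y - x
  let g : ℝ → ℝ := fun t => f (x + t • v) - f x - t * fderiv ℝ f x v
  have hg : ∀ t, HasDerivAt g ((fderiv ℝ f (x + t • v) - fderiv ℝ f x) v) t := by
    intro t
    have hline : HasDerivAt (fun t : ℝ => x + t • v) v t := by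
      simpa using ((hasDerivAt_id t).smul_const v).const_add x
    rw [sub_apply]
    exact (((hf _).hasFDerivAt.comp_hasDerivAt t hline).sub_const (f x)).sub
      (hasDerivAt_mul_const (fderiv ℝ f x v))
  have hB : ∀ t, HasDerivAt (fun t => L / 2 * t ^ 2 * ‖v‖ ^ 2) (L * t * ‖v‖ ^ 2) t := by
    intro t
    refine (((hasDerivAt_pow 2 t).const_mul (L / 2)).mul_const (‖v‖ ^ 2)).congr_deriv ?_
    simp only [Nat.cast_ofNat, Nat.reduceSub, pow_one]
    ring
  have bound : ∀ t ∈ Ico (0 : ℝ) 1,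
      ‖(fderiv ℝ f (x + t • v) - fderiv ℝ f x) v‖ ≤ L * t * ‖v‖ ^ 2 := by
    intro t ht
    calc _ ≤ ‖fderiv ℝ f (x + t • v) - fderiv ℝ f x‖ * ‖v‖ := ContinuousLinearMap.le_opNorm _ _
      _ ≤ L * ‖t • v‖ * ‖v‖ := by gcongr; simpa using hLip (x + t • v) x
      _ = L * t * ‖v‖ ^ 2 := by rw [norm_smul, Real.norm_of_nonneg ht.1]; ring
  have hbound := image_norm_le_of_norm_deriv_right_le_deriv_boundary
    (fun t _ => (hg t).continuousAt.continuousWithinAt) (fun t _ => (hg t).hasDerivWithinAt)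
    (by simp [g]) hB bound (right_mem_Icc.2 zero_le_one)
  simpa [g, v] using hbound

end NormedSpace

section InnerProductSpace

variable {E : Type*} [NormedAddCommGroup E] [InnerProductSpace ℝ E] [CompleteSpace E]
  {f : E → ℝ} {L : ℝ}

theorem le_add_inner_gradient_add_sq_of_lipschitz_gradient (hf : Differentiable ℝ f)
    (hLip : ∀ x y, ‖∇ f x - ∇ f y‖ ≤ L * ‖x - y‖) (x y : E) :
    f y ≤ f x + ⟪∇ f x, y - x⟫_ℝ + L / 2 * ‖y - x‖ ^ 2 := by
  have hLip_fderiv : ∀ x y, ‖fderiv ℝ f x - fderiv ℝ f y‖ ≤ L * ‖x - y‖ := fun x y => by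
    simpa [gradient, ← map_sub] using hLip x y
  rw [gradient, toDual_symm_apply]
  linarith [(le_abs_self _).trans
    (abs_sub_sub_fderiv_le_of_lipschitz_fderiv hf hLip_fderiv x y)]

theorem mul_norm_gradient_sub_le_of_isMinOn_closedBall {r : E → ℝ} {α β R s : ℝ}
    (hf : Differentiable ℝ f) (hLip : ∀ x y, ‖∇ f x - ∇ f y‖ ≤ L * ‖x - y‖)
    (hr : ∀ x y, |r x - r y| ≤ α * ‖x - y‖ + 2 * β) {x₀ : E}
    (hmin : IsMinOn (f + r) (closedBall x₀ R) x₀) (hg : ∇ f x₀ ≠ 0) (hs₀ : 0 ≤ s) (hsR : s ≤ R) :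
    s * (‖∇ f x₀‖ - α) ≤ L / 2 * s ^ 2 + 2 * β := by
  set g := ∇ f x₀
  have hg' : 0 < ‖g‖ := norm_pos_iff.2 hg
  set y := x₀ - (s / ‖g‖) • g
  have hdist : ‖y - x₀‖ = s := by
    rw [sub_sub_cancel_left, norm_neg, norm_smul, Real.norm_of_nonneg (by positivity),
      div_mul_cancel₀ _ hg'.ne']
  have hinner : ⟪g, y - x₀⟫_ℝ = -(s * ‖g‖) := by
    rw [sub_sub_cancel_left, inner_neg_right, real_inner_smul_right, real_inner_self_eq_norm_sq]
    field_simp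
  have hFy : f x₀ + r x₀ ≤ f y + r y :=
    isMinOn_iff.1 hmin y (by rwa [mem_closedBall, dist_eq_norm, hdist])
  have hfy := le_add_inner_gradient_add_sq_of_lipschitz_gradient hf hLip x₀ y
  have hry := (le_abs_self _).trans (hr y x₀)
  rw [hinner, hdist] at hfy
  rw [hdist] at hry
  linarith

end InnerProductSpace

theorem le_max_of_forall_mul_le_half_mul_sq_add {D L β R : ℝ} (hR : 0 < R)
    (h : ∀ s, 0 ≤ s → s ≤ R → s * D ≤ L / 2 * s ^ 2 + 2 * β) :
    D ≤ max (4 * β / R) (2 * √(β * L)) := by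
  rcases le_or_gt D 0 with hD | hD
  · exact hD.trans (le_max_of_le_right (by positivity))
  rcases le_or_gt D (L * R) with hLR | hLR
  · have hL : 0 < L := pos_of_mul_pos_left (hD.trans_le hLR) hR.le
    have hs := h (D / L) (by positivity) ((div_le_iff₀ hL).2 (by linarith))
    have hD2 : D ^ 2 ≤ 4 * (β * L) := by
      field_simp at hs
      nlinarith
    refine le_max_of_le_right ?_
    have : D / 2 ≤ √(β * L) := (Real.le_sqrt' (by positivity)).2 (by nlinarith)
    linarith
  · have hs := h R hR.le le_rfl
    have : L * R ^ 2 < D * R := by nlinarith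
    exact le_max_of_le_left ((le_div_iff₀ hR).2 (by nlinarith))

theorem stmt_4_general (n : ℕ) (f r : EuclideanSpace ℝ (Fin n) → ℝ)
    (L α β R : ℝ) (hα : 0 ≤ α) (hR : 0 < R)
    (hf : Differentiable ℝ f)
    (hLip : ∀ x y, ‖gradient f x - gradient f y‖ ≤ L * ‖x - y‖)
    (hr : ∀ x y, |r x - r y| ≤ α * ‖x - y‖ + 2 * β)
    (F : EuclideanSpace ℝ (Fin n) → ℝ) (hF : ∀ x, F x = f x + r x)
    (xbar : EuclideanSpace ℝ (Fin n))
    (hmin : ∀ x ∈ Metric.closedBall xbar R, F xbar ≤ F x) :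
    ‖gradient f xbar‖ ≤ α + max (4 * β / R) (2 * Real.sqrt (β * L)) := by
  rcases eq_or_ne (∇ f xbar) 0 with hg | hg
  · rw [hg, norm_zero]
    exact add_nonneg hα (le_max_of_le_right (by positivity))
  have hmin' : IsMinOn (f + r) (closedBall xbar R) xbar :=
    isMinOn_iff.2 fun x hx => by simpa only [hF, Pi.add_apply] using hmin x hx
  have := le_max_of_forall_mul_le_half_mul_sq_add hR fun _ hs₀ hsR =>
    mul_norm_gradient_sub_le_of_isMinOn_closedBall hf hLip hr hmin' hg hs₀ hsR
  linarith

theorem stmt_4 (n : ℕ) (f r : EuclideanSpace ℝ (Fin n) → ℝ)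
    (L α β R : ℝ) (hL : 0 ≤ L) (hα : 0 ≤ α) (hβ : 0 ≤ β) (hR : 0 < R)
    (hf : Differentiable ℝ f)
    (hLip : ∀ x y, ‖gradient f x - gradient f y‖ ≤ L * ‖x - y‖)
    (hr : ∀ x y, |r x - r y| ≤ α * ‖x - y‖ + 2 * β)
    (F : EuclideanSpace ℝ (Fin n) → ℝ) (hF : ∀ x, F x = f x + r x)
    (xbar : EuclideanSpace ℝ (Fin n))
    (hmin : ∀ x ∈ Metric.closedBall xbar R, F xbar ≤ F x) :
    ‖gradient f xbar‖ ≤ α + max (4 * β / R) (2 * Real.sqrt (β * L)) :=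
  stmt_4_general n f r L α β R hα hR hf hLip hr F hF xbar hmin
end

section
/- Let F(x₁,…,x_s) = f(x) + r(x) where ∇f is L-Lipschitz and |r(x) − r(y)| ≤ α‖x − y‖ + 2β. If x̄ is a blockwise R-local minimizer, i.e., for each block i, F(x̄_i, x̄_{−i}) ≤ F(x_i, x̄_{−i}) for all x_i ∈ B(x̄_i, R_i), then ‖∇f(x̄)‖ ≤ ‖v‖ where v_i = α + max{4β/R_i, 2√(βL)}. -/
/-!
Within block `i` move from `x̄` by `t` against `∇ᵢf(x̄)`, for `0 < t ≤ Rᵢ`. The descent lemma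
bounds the gain of `f` by `t ‖∇ᵢf(x̄)‖ - L t² / 2` and the hypothesis on `r` bounds the loss of
`r` by `α t + 2β`; blockwise minimality gives `t (‖∇ᵢf(x̄)‖ - α) ≤ 2β + L t² / 2`. Choosing
`t = 4β / (‖∇ᵢf(x̄)‖ - α)` (or `t` small when `β = 0`) yields the per-block bound `vᵢ`, and the
Euclidean norm of the block vector is at most `‖v‖`.
-/

open InnerProductSpace Set

theorem le_max_of_forall_mul_le_add_sq {c β L R : ℝ} (hβ : 0 ≤ β) (hL : 0 ≤ L) (hR : 0 < R)
    (h : ∀ t, 0 < t → t ≤ R → c * t ≤ 2 * β + L / 2 * t ^ 2) :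
    c ≤ max (4 * β / R) (2 * √(β * L)) := by
  by_contra! hc
  have hc₀ : 0 < c := lt_of_le_of_lt (by positivity) (le_max_left _ _ |>.trans_lt hc)
  rcases hβ.eq_or_lt with rfl | hβ
  · -- `t = R c / (c + L R)` keeps `L t / 2` below `c`
    have ht : 0 < R * c / (c + L * R) := by positivity
    have := h _ ht (by rw [div_le_iff₀ (by positivity)]; nlinarith [mul_nonneg hL hR.le])
    field_simp at this
    nlinarith [mul_pos (pow_pos hc₀ 3) hR, mul_nonneg (sq_nonneg (c * R)) hL]
  · -- `t = 4β / c` gives `c t - 2β = 2β > L t² / 2`, since `c² > 4βL`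
    have hcR : 4 * β / R < c := (le_max_left _ _).trans_lt hc
    have hcsq : 4 * (β * L) < c ^ 2 := by
      have := (le_max_right _ _).trans_lt hc
      nlinarith [Real.sq_sqrt (mul_nonneg hβ.le hL), Real.sqrt_nonneg (β * L)]
    have := h (4 * β / c) (by positivity)
      (by rw [div_le_iff₀ hc₀]; rw [div_lt_iff₀ hR] at hcR; linarith)
    field_simp at this
    nlinarith

section InnerProductSpace

variable {E : Type*} [NormedAddCommGroup E] [InnerProductSpace ℝ E] {α β L : ℝ}

theorem norm_le_of_forall_neg_inner_le {g : E} {R : ℝ} (hα : 0 ≤ α) (hβ : 0 ≤ β) (hL : 0 ≤ L)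
    (hR : 0 < R) (h : ∀ w : E, ‖w‖ ≤ R → -⟪g, w⟫_ℝ ≤ α * ‖w‖ + 2 * β + L / 2 * ‖w‖ ^ 2) :
    ‖g‖ ≤ α + max (4 * β / R) (2 * √(β * L)) := by
  suffices ‖g‖ - α ≤ max (4 * β / R) (2 * √(β * L)) by linarith
  refine le_max_of_forall_mul_le_add_sq hβ hL hR fun t ht htR => ?_
  rcases eq_or_ne g 0 with rfl | hg
  · rw [norm_zero]
    nlinarith [mul_nonneg hα ht.le, mul_nonneg hL (sq_nonneg t)]
  · have hg' : 0 < ‖g‖ := norm_pos_iff.2 hg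
    have hw : ‖-(t / ‖g‖) • g‖ = t := by
      rw [norm_smul, norm_neg, Real.norm_of_nonneg (by positivity), div_mul_cancel₀ _ hg'.ne']
    have := h _ (hw ▸ htR)
    rw [hw, inner_smul_right, real_inner_self_eq_norm_sq] at this
    field_simp at this
    linarith

variable [CompleteSpace E] {f r : E → ℝ}

theorem Differentiable.hasDerivAt_comp_add_smul (hf : Differentiable ℝ f) (x d : E) (t : ℝ) :
    HasDerivAt (fun t : ℝ => f (x + t • d)) ⟪gradient f (x + t • d), d⟫_ℝ t := by
  have hline : HasDerivAt (fun t : ℝ => x + t • d) d t := by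
    simpa using ((hasDerivAt_id t).smul_const d).const_add x
  exact ((hf _).hasGradientAt.hasFDerivAt.comp_hasDerivAt t hline).congr_deriv (by simp)

theorem image_add_le_of_lipschitz_gradient (hf : Differentiable ℝ f)
    (hLip : ∀ x y, ‖gradient f x - gradient f y‖ ≤ L * ‖x - y‖) (x d : E) :
    f (x + d) ≤ f x + ⟪gradient f x, d⟫_ℝ + L / 2 * ‖d‖ ^ 2 := by
  set B : ℝ → ℝ := fun t => f x + t * ⟪gradient f x, d⟫_ℝ + L / 2 * ‖d‖ ^ 2 * t ^ 2
  have hB : ∀ t, HasDerivAt B (⟪gradient f x, d⟫_ℝ + L * ‖d‖ ^ 2 * t) t := fun t =>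
    ((((hasDerivAt_id t).mul_const ⟪gradient f x, d⟫_ℝ).const_add (f x)).add
      ((hasDerivAt_pow 2 t).const_mul (L / 2 * ‖d‖ ^ 2))).congr_deriv (by simp; ring)
  have hφ := hf.hasDerivAt_comp_add_smul x d
  have slope_le : ∀ t ∈ Ico (0 : ℝ) 1,
      ⟪gradient f (x + t • d), d⟫_ℝ ≤ ⟪gradient f x, d⟫_ℝ + L * ‖d‖ ^ 2 * t := by
    rintro t ⟨ht, -⟩
    have : ⟪gradient f (x + t • d) - gradient f x, d⟫_ℝ ≤ L * ‖d‖ ^ 2 * t :=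
      calc _ ≤ ‖gradient f (x + t • d) - gradient f x‖ * ‖d‖ := real_inner_le_norm _ _
        _ ≤ L * ‖t • d‖ * ‖d‖ := by
          gcongr; simpa using hLip (x + t • d) x
        _ = L * ‖d‖ ^ 2 * t := by rw [norm_smul, Real.norm_of_nonneg ht]; ring
    rw [inner_sub_left] at this
    linarith
  have := image_le_of_deriv_right_le_deriv_boundary (f := fun t : ℝ => f (x + t • d))
    (fun t _ => (hφ t).continuousAt.continuousWithinAt) (fun t _ => (hφ t).hasDerivWithinAt)
    (by simp [B]) (fun t _ => (hB t).continuousAt.continuousWithinAt)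
    (fun t _ => (hB t).hasDerivWithinAt) slope_le (right_mem_Icc.2 zero_le_one)
  simpa [B] using this

theorem neg_inner_gradient_le_of_le_add (hf : Differentiable ℝ f)
    (hLip : ∀ x y, ‖gradient f x - gradient f y‖ ≤ L * ‖x - y‖)
    (hr : ∀ x y, |r x - r y| ≤ α * ‖x - y‖ + 2 * β) {x d : E}
    (hmin : f x + r x ≤ f (x + d) + r (x + d)) :
    -⟪gradient f x, d⟫_ℝ ≤ α * ‖d‖ + 2 * β + L / 2 * ‖d‖ ^ 2 := by
  have hdesc := image_add_le_of_lipschitz_gradient hf hLip x d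
  have hrd := (abs_le.1 (hr (x + d) x)).2
  rw [add_sub_cancel_left] at hrd
  linarith

end InnerProductSpace

namespace PiLp

theorem inner_single_right {ι : Type*} [Fintype ι] [DecidableEq ι] {E : ι → Type*}
    [∀ i, NormedAddCommGroup (E i)] [∀ i, InnerProductSpace ℝ (E i)]
    (x : PiLp 2 E) (i : ι) (a : E i) :
    ⟪x, single 2 i a⟫_ℝ = ⟪x i, a⟫_ℝ := by
  rw [inner_apply, Fintype.sum_eq_single i fun j hj => by simp [Pi.single_eq_of_ne hj]]
  simp

theorem toLp_update_eq_add_single {ι : Type*} [DecidableEq ι] {p : ENNReal} {E : ι → Type*}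
    [∀ i, SeminormedAddCommGroup (E i)] (x : PiLp p E) (i : ι) (a : E i) :
    WithLp.toLp p (Function.update x.ofLp i a) = x + single p i (a - x i) := by
  ext j
  rw [add_apply, toLp_apply]
  rcases eq_or_ne j i with rfl | hj
  · rw [Function.update_self, single_eq_same, add_sub_cancel]
  · rw [Function.update_of_ne hj, single_eq_of_ne p hj, add_zero]

end PiLp

theorem stmt_10 (s : ℕ) (n : Fin s → ℕ)
    (f r : PiLp 2 (fun i : Fin s => EuclideanSpace ℝ (Fin (n i))) → ℝ)
    (L α β : ℝ) (hL : 0 ≤ L) (hα : 0 ≤ α) (hβ : 0 ≤ β)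
    (R : Fin s → ℝ) (hR : ∀ i, 0 < R i)
    (hf : Differentiable ℝ f)
    (hLip : ∀ x y, ‖gradient f x - gradient f y‖ ≤ L * ‖x - y‖)
    (hr : ∀ x y, |r x - r y| ≤ α * ‖x - y‖ + 2 * β)
    (F : PiLp 2 (fun i : Fin s => EuclideanSpace ℝ (Fin (n i))) → ℝ)
    (hF : ∀ x, F x = f x + r x)
    (xbar : PiLp 2 (fun i : Fin s => EuclideanSpace ℝ (Fin (n i))))
    (hmin : ∀ i : Fin s, ∀ xi ∈ Metric.closedBall (xbar i) (R i),
      F xbar ≤ F (WithLp.toLp 2 (Function.update xbar i xi))) :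
    ‖gradient f xbar‖ ≤
      Real.sqrt (∑ i : Fin s, (α + max (4 * β / R i) (2 * Real.sqrt (β * L))) ^ 2) := by
  have hblock : ∀ i, ‖gradient f xbar i‖ ≤ α + max (4 * β / R i) (2 * √(β * L)) := fun i =>
    norm_le_of_forall_neg_inner_le hα hβ hL (hR i) fun w hw => by
      have hle := hmin i (xbar i + w) (by simpa using hw)
      rw [PiLp.toLp_update_eq_add_single, add_sub_cancel_left, hF, hF] at hle
      simpa only [PiLp.inner_single_right, PiLp.norm_single] using
        neg_inner_gradient_le_of_le_add hf hLip hr hle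
  calc ‖gradient f xbar‖ = √(∑ i, ‖gradient f xbar i‖ ^ 2) := PiLp.norm_eq_of_L2 _
    _ ≤ _ := Real.sqrt_le_sqrt <| Finset.sum_le_sum fun i _ =>
      pow_le_pow_left₀ (norm_nonneg _) (hblock i) 2
end

section
/- Let g : [0, R] → ℝ be the quadratic g(t) = 2β + (α − c)t + (L/2)t², where c = ‖∇f(x̄)‖ > α, β ≥ 0, L > 0. If g(t) ≥ 0 for all t ∈ [0, R], then c ≤ α + max{4β/R, 2√(βL)}. -/
/-!
Write `d = c - α`. If `R * L ≤ d`, the quadratic is still decreasing up to `R`, and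
`g R ≥ 0` together with `(L / 2) R ≤ d / 2` gives `d R ≤ 4 β`. Otherwise the vertex `d / L`
lies in `[0, R]` (the case `d ≤ 0` being trivial), and `g (d / L) = 2 β - d² / (2 L) ≥ 0`
gives `d ≤ 2 √(β L)`.
-/

theorem sub_le_four_mul_div_of_quadratic_nonneg {α β L R c : ℝ} (hR : 0 < R)
    (hRL : R * L ≤ c - α) (hgR : 0 ≤ 2 * β + (α - c) * R + L / 2 * R ^ 2) :
    c - α ≤ 4 * β / R := by
  rw [le_div_iff₀ hR]
  nlinarith [mul_le_mul_of_nonneg_right hRL hR.le]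

theorem sub_le_two_mul_sqrt_of_quadratic_nonneg {α β L c : ℝ} (hL : 0 < L)
    (hgv : 0 ≤ 2 * β + (α - c) * ((c - α) / L) + L / 2 * ((c - α) / L) ^ 2) :
    c - α ≤ 2 * √(β * L) := by
  have hsq : ((c - α) / 2) ^ 2 ≤ β * L := by
    have hvertex : 2 * β + (α - c) * ((c - α) / L) + L / 2 * ((c - α) / L) ^ 2
        = 2 * β - (c - α) ^ 2 / (2 * L) := by
      field_simp
      ring
    rw [hvertex, sub_nonneg, div_le_iff₀ (by positivity)] at hgv
    linarith
  linarith [le_abs_self ((c - α) / 2), Real.abs_le_sqrt hsq]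

theorem stmt_16_general (α β L R c : ℝ) (hR : 0 < R)
    (g : ℝ → ℝ) (hg : ∀ t, g t = 2 * β + (α - c) * t + L / 2 * t ^ 2)
    (hpos : ∀ t ∈ Set.Icc (0 : ℝ) R, 0 ≤ g t) :
    c ≤ α + max (4 * β / R) (2 * Real.sqrt (β * L)) := by
  rcases le_or_gt (R * L) (c - α) with hRL | hLR
  · have hgR := hg R ▸ hpos R ⟨hR.le, le_rfl⟩
    linarith [sub_le_four_mul_div_of_quadratic_nonneg hR hRL hgR,
      le_max_left (4 * β / R) (2 * √(β * L))]
  rcases le_or_gt c α with hcα | hαc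
  · linarith [Real.sqrt_nonneg (β * L), le_max_right (4 * β / R) (2 * √(β * L))]
  have hL : 0 < L := pos_of_mul_pos_right (by linarith) hR.le
  have hvertex_mem : (c - α) / L ∈ Set.Icc 0 R :=
    ⟨div_nonneg (by linarith) hL.le, (div_le_iff₀ hL).2 (by linarith)⟩
  have hgv := hg _ ▸ hpos _ hvertex_mem
  linarith [sub_le_two_mul_sqrt_of_quadratic_nonneg hL hgv,
    le_max_right (4 * β / R) (2 * √(β * L))]

theorem stmt_16 (α β L R c : ℝ) (hβ : 0 ≤ β) (hL : 0 < L) (hR : 0 < R)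
    (hc : α < c)
    (g : ℝ → ℝ) (hg : ∀ t, g t = 2 * β + (α - c) * t + L / 2 * t ^ 2)
    (hpos : ∀ t ∈ Set.Icc (0 : ℝ) R, 0 ≤ g t) :
    c ≤ α + max (4 * β / R) (2 * Real.sqrt (β * L)) :=
  stmt_16_general α β L R c hR g hg hpos
end
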